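/- arXiv:2004.10655 — 6 statements merged into one kernel-verified Lean document; each statement's English description precedes it below -/
import Mathlib

section
/- If a transition t is enabled in a marking m of a marked graph, and p is a path from transition t1 to transition t2, then firing t changes the total marking of p as follows: if t = t1 = t2 the total marking of p is unchanged; if t = t1 ≠ t2 it increases by 1; if t = t2 ≠ t1 it decreases by 1; and if t ≠ t1 and t ≠ t2 it is unchanged. -/
open scoped Classical
noncomputable section

/-! ### Marked graphs -/

structure MarkedGraph (T : Type) where
  place : T → T → Type
  initMarking : ∀ t1 t2, place t1 t2 → ℕ

def Marking {T : Type} (M : MarkedGraph T) : Type :=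
  ∀ t1 t2, M.place t1 t2 → ℕ

/-- A transition is enabled if all of its input places carry positive marking. -/
def MarkedGraph.enabled {T : Type} (M : MarkedGraph T) (t : T) (m : Marking M) : Prop :=
  ∀ t0 (p : M.place t0 t), 0 < m t0 t p

/-- Firing a transition decrements its input places and increments its output places. -/
def MarkedGraph.fire {T : Type} (M : MarkedGraph T) (t : T) (m : Marking M) : Marking M :=
  fun t1 t2 p =>
    if t1 = t ∧ t2 = t then m t1 t2 p
    else if t2 = t then m t1 t2 p - 1
    else if t1 = t then m t1 t2 p + 1
    else m t1 t2 p

/-- Reachability of a marking by a list of transitions, fired in order.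
The *head* of the list is the most recently fired transition. -/
inductive MarkedGraph.reaches {T : Type} (M : MarkedGraph T) : List T → Marking M → Prop
  | nil : M.reaches [] M.initMarking
  | cons {ls : List T} {m : Marking M} {t : T} :
      M.reaches ls m → M.enabled t m → M.reaches (t :: ls) (M.fire t m)

/-- A path of places: consecutive places share a transition. -/
inductive MarkedGraph.Path {T : Type} (M : MarkedGraph T) : T → T → Type
  | single {t1 t2 : T} : M.place t1 t2 → M.Path t1 t2
  | cons {t1 t2 t3 : T} : M.place t1 t2 → M.Path t2 t3 → M.Path t1 t3

/-- The total marking of a path: the sum of the markings of its places. -/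
def MarkedGraph.pathMarking {T : Type} {M : MarkedGraph T} (m : Marking M) :
    ∀ {t1 t2 : T}, M.Path t1 t2 → ℕ
  | _, _, .single p => m _ _ p
  | _, _, .cons p ps => m _ _ p + MarkedGraph.pathMarking m ps

/-- One marked graph refines another if every list of transitions executable
in the first is also executable in the second. -/
def MarkedGraph.refines {T : Type} (M1 M2 : MarkedGraph T) : Prop :=
  ∀ ls : List T, (∃ m, M1.reaches ls m) → ∃ m, M2.reaches ls m

/-! ### Circuits -/

inductive Value
  | Num : ℕ → Value
  | X : Value

inductive Latch (even odd : Type)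
  | E : even → Latch even odd
  | O : odd → Latch even odd

def Latch.isOdd {even odd : Type} : Latch even odd → Bool
  | .E _ => false
  | .O _ => true

inductive Event (L : Type)
  | Rise : L → Event L
  | Fall : L → Event L

/-- Number of occurrences of an event in a trace. -/
def numEvents {L : Type} (e : Event L) : List (Event L) → ℕ
  | [] => 0
  | e' :: t => (if e' = e then 1 else 0) + numEvents e t

structure Circuit (even odd : Type) where
  evenOddNeighbors : List (even × odd)
  oddEvenNeighbors : List (odd × even)
  nextStateE : even → (odd → Value) → Value
  nextStateO : odd → (even → Value) → Value

/-- `c.neighbor l l'` : `l` is a left neighbor of `l'`. -/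
def Circuit.neighbor {even odd : Type} (c : Circuit even odd) :
    Latch even odd → Latch even odd → Prop
  | .E e, .O o => (e, o) ∈ c.evenOddNeighbors
  | .O o, .E e => (o, e) ∈ c.oddEvenNeighbors
  | _, _ => False

/-- Next-state function of a latch, from the values of its left neighbors. -/
def Circuit.nextState {even odd : Type} (c : Circuit even odd)
    (st : Latch even odd → Value) : Latch even odd → Value
  | .E e => c.nextStateE e (fun o => st (.O o))
  | .O o => c.nextStateO o (fun e => st (.E e))

/-! ### Synchronous execution : odd latches update first each cycle -/

def Circuit.syncE {even odd : Type} (c : Circuit even odd)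
    (st0 : Latch even odd → Value) : ℕ → even → Value
  | 0, e => st0 (.E e)
  | n+1, e => c.nextStateE e (fun o => c.nextStateO o (fun e' => c.syncE st0 n e'))

def Circuit.syncO {even odd : Type} (c : Circuit even odd)
    (st0 : Latch even odd → Value) : ℕ → odd → Value
  | 0, _ => Value.X
  | n+1, o => c.nextStateO o (fun e => c.syncE st0 n e)

/-- Synchronous execution of a circuit. -/
def Circuit.sync {even odd : Type} (c : Circuit even odd)
    (st0 : Latch even odd → Value) (n : ℕ) : Latch even odd → Value
  | .E e => c.syncE st0 n e
  | .O o => c.syncO st0 n o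

/-! ### Traces, transparency, asynchronous execution -/

inductive Transparency
  | Transparent
  | Opaque

/-- Transparency of a latch after a trace (head of the list = latest event):
odd latches start transparent, even latches start opaque. -/
def transparency {even odd : Type} :
    List (Event (Latch even odd)) → Latch even odd → Transparency
  | [], l => if l.isOdd then .Transparent else .Opaque
  | .Rise l' :: t, l => if l' = l then .Transparent else transparency t l
  | .Fall l' :: t, l => if l' = l then .Opaque else transparency t l

/-- Asynchronous execution of a trace on a circuit. -/
inductive Circuit.async {even odd : Type} (c : Circuit even odd)
    (st0 : Latch even odd → Value) :
    List (Event (Latch even odd)) → Latch even odd → Transparency → Value → Prop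
  | async_transparent (t : List (Event (Latch even odd))) (l : Latch even odd)
      (st : Latch even odd → Value) :
      transparency t l = .Transparent →
      (∀ l', c.neighbor l' l → c.async st0 t l' (transparency t l') (st l')) →
      c.async st0 t l .Transparent (c.nextState st l)
  | async_nil (e : even) :
      c.async st0 [] (.E e) .Opaque (st0 (.E e))
  | async_opaque (l : Latch even odd) (ev : Event (Latch even odd))
      (t : List (Event (Latch even odd))) (v : Value) :
      transparency (ev :: t) l = .Opaque →
      ev ≠ .Fall l →
      c.async st0 t l .Opaque v →
      c.async st0 (ev :: t) l .Opaque v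
  | async_opaque_fall (l : Latch even odd) (t : List (Event (Latch even odd)))
      (st : Latch even odd → Value) :
      (∀ l', c.neighbor l' l → c.async st0 t l' (transparency t l') (st l')) →
      c.async st0 (.Fall l :: t) l .Opaque (c.nextState st l)

/-- Flow equivalence of a marked-graph protocol for a circuit and initial state. -/
def flowEquivalence {even odd : Type} (M : MarkedGraph (Event (Latch even odd)))
    (c : Circuit even odd) (st0 : Latch even odd → Value) : Prop :=
  ∀ (l : Latch even odd) (t : List (Event (Latch even odd))) (v : Value),
    (∃ m, M.reaches t m) →
    c.async st0 t l .Opaque v →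
    v = c.sync st0 (numEvents (.Fall l) t) l

/-! ### The rise-decoupled (fully-decoupled) protocol -/

inductive RDPlace {even odd : Type} (c : Circuit even odd) :
    Event (Latch even odd) → Event (Latch even odd) → Type
  | fall (l : Latch even odd) : RDPlace c (.Rise l) (.Fall l)
  | rise (l : Latch even odd) : RDPlace c (.Fall l) (.Rise l)
  /-- `a- → b-` for `a` a left neighbor of `b`. -/
  | fallFall (a b : Latch even odd) : c.neighbor a b → RDPlace c (.Fall a) (.Fall b)
  /-- `b- → a+` for `a` a left neighbor of `b`. -/
  | fallRise (a b : Latch even odd) : c.neighbor a b → RDPlace c (.Fall b) (.Rise a)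

def riseDecoupled {even odd : Type} (c : Circuit even odd) :
    MarkedGraph (Event (Latch even odd)) where
  place := RDPlace c
  initMarking := fun _ _ p =>
    match p with
    | .fall l => if l.isOdd then 1 else 0
    | .rise l => if l.isOdd then 0 else 1
    | .fallFall a _ _ => if a.isOdd then 0 else 1
    | .fallRise _ _ _ => 0

/-! ### The fall-decoupled protocol -/

inductive FDPlace {even odd : Type} (c : Circuit even odd) :
    Event (Latch even odd) → Event (Latch even odd) → Type
  | fall (l : Latch even odd) : FDPlace c (.Rise l) (.Fall l)
  | rise (l : Latch even odd) : FDPlace c (.Fall l) (.Rise l)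
  /-- `a+ → b+` for `a` a left neighbor of `b`: a latch rises only after its
  left neighbors' corresponding rises. -/
  | riseRise (a b : Latch even odd) : c.neighbor a b → FDPlace c (.Rise a) (.Rise b)
  /-- `b+ → a+` for `a` a left neighbor of `b`. -/
  | riseRise' (a b : Latch even odd) : c.neighbor a b → FDPlace c (.Rise b) (.Rise a)

def fallDecoupled {even odd : Type} (c : Circuit even odd) :
    MarkedGraph (Event (Latch even odd)) where
  place := FDPlace c
  initMarking := fun _ _ p =>
    match p with
    | .fall l => if l.isOdd then 1 else 0
    | .rise l => if l.isOdd then 0 else 1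
    | .riseRise a _ _ => if a.isOdd then 1 else 0
    | .riseRise' _ b _ => if b.isOdd then 1 else 0

/-! ### The semi-decoupled protocol (less concurrent than rise-decoupled) -/

inductive SDPlace {even odd : Type} (c : Circuit even odd) :
    Event (Latch even odd) → Event (Latch even odd) → Type
  | fall (l : Latch even odd) : SDPlace c (.Rise l) (.Fall l)
  | rise (l : Latch even odd) : SDPlace c (.Fall l) (.Rise l)
  | fallFall (a b : Latch even odd) : c.neighbor a b → SDPlace c (.Fall a) (.Fall b)
  | fallRise (a b : Latch even odd) : c.neighbor a b → SDPlace c (.Fall b) (.Rise a)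
  /-- Extra synchronization arc `b+ → a+` making the protocol less concurrent. -/
  | riseRise (a b : Latch even odd) : c.neighbor a b → SDPlace c (.Rise b) (.Rise a)

def semiDecoupled {even odd : Type} (c : Circuit even odd) :
    MarkedGraph (Event (Latch even odd)) where
  place := SDPlace c
  initMarking := fun _ _ p =>
    match p with
    | .fall l => if l.isOdd then 1 else 0
    | .rise l => if l.isOdd then 0 else 1
    | .fallFall a _ _ => if a.isOdd then 0 else 1
    | .fallRise _ _ _ => 0
    | .riseRise _ b _ => if b.isOdd then 1 else 0

/-! ### The desynchronization protocol -/

inductive DPlace {even odd : Type} (c : Circuit even odd) :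
    Event (Latch even odd) → Event (Latch even odd) → Type
  | fall (l : Latch even odd) : DPlace c (.Rise l) (.Fall l)
  | rise (l : Latch even odd) : DPlace c (.Fall l) (.Rise l)
  /-- `a+ → b-` for `a` a left neighbor of `b`. -/
  | riseFall (a b : Latch even odd) : c.neighbor a b → DPlace c (.Rise a) (.Fall b)
  /-- `b- → a+` for `a` a left neighbor of `b`. -/
  | fallRise (a b : Latch even odd) : c.neighbor a b → DPlace c (.Fall b) (.Rise a)

def desynchronization {even odd : Type} (c : Circuit even odd) :
    MarkedGraph (Event (Latch even odd)) where
  place := DPlace c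
  initMarking := fun _ _ p =>
    match p with
    | .fall l => if l.isOdd then 1 else 0
    | .rise l => if l.isOdd then 0 else 1
    | .riseFall _ _ _ => 1
    | .fallRise _ _ _ => 0

/-! ### The three-stage increment pipeline SRC → A → B → C → SNK -/

inductive EvenLatchP
  | A
  | C

inductive OddLatchP
  | SRC
  | B
  | SNK

def incValue : Value → Value
  | .Num n => .Num (n + 1)
  | .X => .Num 0

def pipeline : Circuit EvenLatchP OddLatchP where
  evenOddNeighbors := [(.A, .SRC), (.A, .B), (.C, .SNK)]
  oddEvenNeighbors := [(.SRC, .A), (.B, .C), (.SNK, .C)]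
  nextStateE := fun e st =>
    match e with
    | .A => st .SRC
    | .C => incValue (st .B)
  nextStateO := fun o st =>
    match o with
    | .SRC => incValue (st .A)
    | .B => incValue (st .A)
    | .SNK => .Num 0

def pipelineInit : Latch EvenLatchP OddLatchP → Value := fun _ => Value.X

/-- The counterexample trace `[SNK-, C+, B-, C-, SNK+, SNK-, C+, B+, C-]`
(events fired in this order; head of the list is the most recent event). -/
def counterTrace : List (Event (Latch EvenLatchP OddLatchP)) :=
  [.Fall (.E .C), .Rise (.O .B), .Rise (.E .C), .Fall (.O .SNK), .Rise (.O .SNK),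
   .Fall (.E .C), .Fall (.O .B), .Rise (.E .C), .Fall (.O .SNK)]

/-- effect of firing an enabled transition on the total marking of a path. -/
theorem fire_path_marking {T : Type} (M : MarkedGraph T) (t t1 t2 : T)
    (m : Marking M) (henabled : M.enabled t m) (p : M.Path t1 t2) :
    (t = t1 ∧ t = t2 → M.pathMarking (M.fire t m) p = M.pathMarking m p) ∧
    (t = t1 ∧ t ≠ t2 → M.pathMarking (M.fire t m) p = M.pathMarking m p + 1) ∧
    (t = t2 ∧ t ≠ t1 → M.pathMarking (M.fire t m) p = M.pathMarking m p - 1) ∧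
    (t ≠ t1 ∧ t ≠ t2 → M.pathMarking (M.fire t m) p = M.pathMarking m p) := by
  have key : ∀ {a b : T} (p : M.Path a b),
      (t = b → 0 < M.pathMarking m p) ∧
      M.pathMarking (M.fire t m) p + (if t = b then 1 else 0)
        = M.pathMarking m p + (if t = a then 1 else 0) := by
    intro a b p
    induction p with
    | @single a b q =>
      have hpos : t = b → 0 < m a b q := by
        intro h; subst h; exact henabled _ q
      refine ⟨hpos, ?_⟩
      simp only [MarkedGraph.pathMarking, MarkedGraph.fire]
      rcases eq_or_ne t b with hb | hb
      · have hm := hpos hb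
        split_ifs <;> first | omega | tauto
      · split_ifs <;> first | omega | tauto
    | @cons a b' b q ps ih =>
      obtain ⟨ihpos, iheq⟩ := ih
      have hfq : M.fire t m a b' q + (if t = b' then 1 else 0)
          = m a b' q + (if t = a then 1 else 0) := by
        simp only [MarkedGraph.fire]
        rcases eq_or_ne t b' with hb | hb
        · have hm : 0 < m a b' q := by subst hb; exact henabled _ q
          split_ifs <;> first | omega | tauto
        · split_ifs <;> first | omega | tauto
      constructor
      · intro h
        have := ihpos h
        simp only [MarkedGraph.pathMarking]; omega
      · simp only [MarkedGraph.pathMarking]; omega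
  obtain ⟨hpos, heq⟩ := key p
  refine ⟨?_, ?_, ?_, ?_⟩
  · rintro ⟨h1, h2⟩
    rw [if_pos h2, if_pos h1] at heq; omega
  · rintro ⟨h1, h2⟩
    rw [if_neg h2, if_pos h1] at heq; omega
  · rintro ⟨h2, h1⟩
    have hm := hpos h2
    rw [if_pos h2, if_neg h1] at heq; omega
  · rintro ⟨h1, h2⟩
    rw [if_neg h2, if_neg h1] at heq; omega
end
end

section
/- If p is a cycle in a marked graph M (a path whose start and end transitions coincide) and m is any marking reachable from the initial marking of M by firing a sequence of enabled transitions, then the total marking of p under m equals the total marking of p under the initial marking of M. -/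
open scoped Classical
noncomputable section

theorem fire_pathMarking {T : Type} (M : MarkedGraph T) (t : T) (m : Marking M)
    (ht : M.enabled t m) :
    ∀ {t1 t2 : T} (p : M.Path t1 t2),
      M.pathMarking (M.fire t m) p + (if t2 = t then 1 else 0) =
        M.pathMarking m p + (if t1 = t then 1 else 0) := by
  intro t1 t2 p
  induction p with
  | @single a b pl =>
    simp only [MarkedGraph.pathMarking, MarkedGraph.fire]
    by_cases hb : b = t <;> by_cases ha : a = t <;> simp [ha, hb]
    · subst hb; have := ht a pl; omega
  | @cons a b c pl ps ih =>
    simp only [MarkedGraph.pathMarking, MarkedGraph.fire]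
    by_cases hb : b = t <;> by_cases ha : a = t <;> simp [ha, hb] at ih ⊢ <;>
      [skip; (subst hb; have := ht a pl); skip; skip] <;> omega

/-- the total marking of a cycle is invariant under reachability. -/
theorem cycle_marking_invariant {T : Type} (M : MarkedGraph T) (t : T)
    (p : M.Path t t) (ls : List T) (m : Marking M) (h : M.reaches ls m) :
    M.pathMarking m p = M.pathMarking M.initMarking p := by
  induction h with
  | nil => rfl
  | @cons ls m' t' h' he ih =>
    have := fire_pathMarking M t' m' he p
    omega
end
end

section
/- In the rise-decoupled marked graph protocol for a circuit c, if a marking m is reachable from the initial marking by executing a trace t, and latch l has a right neighbor l' such that the place (l- → l'-) has positive marking in m, then latch l is opaque after trace t. -/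
open scoped Classical
noncomputable section

/-! In a marked graph, firing a transition moves one token from each input place to each output
place, so the number of tokens on every cycle is invariant. In the rise-decoupled protocol the cycle
`l+ → l- → l+` carries one token, which sits on `l+ → l-` exactly when `l` is transparent, and the
triangle `l+ → l- → l'- → l+` also carries one token. A token on `l- → l'-` therefore leaves
`l+ → l-` empty, i.e. `l` opaque. -/

namespace MarkedGraph

variable {T : Type} {M : MarkedGraph T}

/-- Stated additively, since `fire` decrements with truncated subtraction. -/
theorem fire_add_of_enabled {t : T} {m : Marking M} (he : M.enabled t m) {t1 t2 : T}
    (p : M.place t1 t2) :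
    M.fire t m t1 t2 p + (if t2 = t then 1 else 0) = m t1 t2 p + (if t1 = t then 1 else 0) := by
  by_cases h2 : t2 = t
  · subst h2
    have hpos := he t1 p
    by_cases h1 : t1 = t2
    · simp [fire, h1]
    · simp [fire, h1]
      omega
  · by_cases h1 : t1 = t <;> simp [fire, h1, h2]

theorem pathMarking_fire_add {t : T} {m : Marking M} (he : M.enabled t m) {t1 t2 : T}
    (ps : M.Path t1 t2) :
    pathMarking (M.fire t m) ps + (if t2 = t then 1 else 0) =
      pathMarking m ps + (if t1 = t then 1 else 0) := by
  induction ps with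
  | single p => exact fire_add_of_enabled he p
  | cons p ps ih =>
    have := fire_add_of_enabled he p
    simp only [pathMarking]
    omega

theorem pathMarking_fire_of_cycle {t t0 : T} {m : Marking M} (he : M.enabled t m)
    (ps : M.Path t0 t0) : pathMarking (M.fire t m) ps = pathMarking m ps := by
  have := pathMarking_fire_add he ps
  omega

theorem reaches.pathMarking_eq_initMarking {ls : List T} {m : Marking M} (h : M.reaches ls m)
    {t0 : T} (ps : M.Path t0 t0) : pathMarking m ps = pathMarking M.initMarking ps := by
  induction h with
  | nil => rfl
  | cons _ he ih => rw [pathMarking_fire_of_cycle he, ih]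

end MarkedGraph

namespace riseDecoupled

variable {even odd : Type} {c : Circuit even odd}
  {t : List (Event (Latch even odd))} {m : Marking (riseDecoupled c)}

theorem fall_add_rise (h : (riseDecoupled c).reaches t m) (l : Latch even odd) :
    m _ _ (RDPlace.fall l) + m _ _ (RDPlace.rise l) = 1 := by
  have := h.pathMarking_eq_initMarking (.cons (RDPlace.fall l) (.single (RDPlace.rise l)))
  cases l <;> simpa [MarkedGraph.pathMarking, riseDecoupled, Latch.isOdd] using this

theorem fall_add_fallFall_add_fallRise (h : (riseDecoupled c).reaches t m)
    {l l' : Latch even odd} (hn : c.neighbor l l') :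
    m _ _ (RDPlace.fall l) + (m _ _ (RDPlace.fallFall l l' hn) + m _ _ (RDPlace.fallRise l l' hn))
      = 1 := by
  have := h.pathMarking_eq_initMarking
    (.cons (RDPlace.fall l) (.cons (RDPlace.fallFall l l' hn) (.single (RDPlace.fallRise l l' hn))))
  cases l <;> simpa [MarkedGraph.pathMarking, riseDecoupled, Latch.isOdd] using this

theorem transparency_eq_opaque_iff (h : (riseDecoupled c).reaches t m) (l : Latch even odd) :
    transparency t l = .Opaque ↔ m _ _ (RDPlace.fall l) = 0 := by
  induction h with
  | nil => cases l <;> simp [transparency, riseDecoupled, Latch.isOdd]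
  | @cons ls m₀ ev hr he ih =>
    have hfire := MarkedGraph.fire_add_of_enabled he (RDPlace.fall l)
    cases ev with
    | Rise x =>
      by_cases hx : x = l
      · subst hx
        simp_all [transparency]
      · simp_all [transparency, Ne.symm hx]
    | Fall x =>
      by_cases hx : x = l
      · subst hx
        have hsum := fall_add_rise hr x
        have hpos := he _ (RDPlace.fall x)
        simp only [transparency, ↓reduceIte, reduceCtorEq, add_zero, true_iff] at hfire ⊢
        omega
      · simp_all [transparency, Ne.symm hx]

end riseDecoupled

/-- in rise-decoupled, positive marking on `l- → l'-` (with `l'`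
a right neighbor of `l`) implies `l` is opaque. -/
theorem rise_decoupled_opacity {even odd : Type} (c : Circuit even odd)
    (t : List (Event (Latch even odd))) (m : Marking (riseDecoupled c))
    (h : (riseDecoupled c).reaches t m)
    (l l' : Latch even odd) (hn : c.neighbor l l')
    (hm : 0 < m (.Fall l) (.Fall l') (RDPlace.fallFall l l' hn)) :
    transparency t l = .Opaque := by
  have htriangle := riseDecoupled.fall_add_fallFall_add_fallRise h hn
  exact (riseDecoupled.transparency_eq_opaque_iff h l).mpr (by omega)
end
end

section
/- In the rise-decoupled marked graph protocol, if m is a marking reachable by trace t and the event l- is enabled in m, then for every left neighbor l' of l, the number of occurrences of l'- in t equals the number of occurrences of l- in t when l is odd, and equals 1 plus the number of occurrences of l- in t when l is even. -/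
open scoped Classical
noncomputable section

/-- Count of a transition in a list. -/
def cnt {T : Type} (t : T) : List T → ℕ
  | [] => 0
  | x :: xs => (if x = t then 1 else 0) + cnt t xs

lemma cnt_eq_numEvents {L : Type} (e : Event L) (tr : List (Event L)) :
    cnt e tr = numEvents e tr := by
  induction tr with
  | nil => rfl
  | cons x xs ih => simp [cnt, numEvents, ih]

/-- Token conservation: marking of a place = initial + firings of source − firings of sink. -/
lemma reaches_invariant {T : Type} (M : MarkedGraph T) {tr : List T} {m : Marking M}
    (h : M.reaches tr m) : ∀ t1 t2 (p : M.place t1 t2),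
      m t1 t2 p + cnt t2 tr = M.initMarking t1 t2 p + cnt t1 tr := by
  induction h with
  | nil => simp [cnt]
  | @cons ls m' t hr he ih =>
    intro t1 t2 p
    have ih' := ih t1 t2 p
    unfold MarkedGraph.fire
    by_cases h1 : t1 = t <;> by_cases h2 : t2 = t
    · subst h1; subst h2; simp [cnt]; omega
    · subst h1
      have h2' : ¬ (t1 = t2) := fun hh => h2 hh.symm
      simp [cnt, h2, h2']; omega
    · subst h2
      have hpos := he t1 p
      have h1' : ¬ (t2 = t1) := fun hh => h1 hh.symm
      simp [cnt, h1, h1']; omega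
    · have h1' : ¬ (t = t1) := fun hh => h1 hh.symm
      have h2' : ¬ (t = t2) := fun hh => h2 hh.symm
      simp [cnt, h1, h2, h1', h2']; omega

lemma neighbor_isOdd {even odd : Type} (c : Circuit even odd) {l' l : Latch even odd}
    (h : c.neighbor l' l) : l'.isOdd = !l.isOdd := by
  cases l' <;> cases l <;> simp [Circuit.neighbor, Latch.isOdd] at h ⊢

/-- in rise-decoupled, if `l-` is enabled then the counts of
falls of `l` and of each left neighbor `l'` are related according to parity. -/
theorem rise_decoupled_num_events {even odd : Type} (c : Circuit even odd)
    (t : List (Event (Latch even odd))) (m : Marking (riseDecoupled c))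
    (h : (riseDecoupled c).reaches t m)
    (l : Latch even odd) (henabled : (riseDecoupled c).enabled (.Fall l) m) :
    ∀ l', c.neighbor l' l →
      numEvents (.Fall l') t =
        if l.isOdd then numEvents (.Fall l) t else 1 + numEvents (.Fall l) t := by
  intro l' hn
  have inv := reaches_invariant _ h
  have h1 := inv _ _ (RDPlace.fallFall l' l hn)
  have h2 := inv _ _ (RDPlace.fallRise l' l hn)
  have h3 := inv _ _ (RDPlace.fall l')
  have e1 := henabled _ (RDPlace.fallFall l' l hn)
  have hodd := neighbor_isOdd c hn
  simp only [riseDecoupled] at h1 h2 h3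
  rw [cnt_eq_numEvents, cnt_eq_numEvents] at h1 h2 h3
  cases hb : l.isOdd <;> simp [hb] at hodd ⊢ <;> simp [hodd] at h1 h2 h3 <;> omega
end
end

section
/- If a latch l is opaque after trace t under the rise-decoupled protocol and evaluates asynchronously to v, and the trace ends with l's fall, i.e., t = t' ▷ l-, with l- enabled in the marking reached by t', then every left neighbor l' of l is opaque in t'. -/
open scoped Classical
noncomputable section

section Aux

variable {even odd : Type} {c : Circuit even odd}

lemma neighbor_ne {a b : Latch even odd} (h : c.neighbor a b) : a ≠ b := by
  intro heq; subst heq; cases a <;> exact h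

lemma rd_invariant {t : List (Event (Latch even odd))} {m : Marking (riseDecoupled c)}
    (h : (riseDecoupled c).reaches t m) :
    (∀ a : Latch even odd,
       m _ _ (RDPlace.rise a) + m _ _ (RDPlace.fall a) = 1 ∧
       (transparency t a = .Transparent ↔ m _ _ (RDPlace.fall a) = 1)) ∧
    (∀ a b (hn : c.neighbor a b),
       m _ _ (RDPlace.fallFall a b hn) + m _ _ (RDPlace.fallRise a b hn)
         + m _ _ (RDPlace.fall a) = 1) := by
  induction h with
  | nil =>
    constructor
    · intro a
      cases a <;> simp [riseDecoupled, MarkedGraph.initMarking, Latch.isOdd, transparency]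
    · intro a b hn
      cases a <;> simp [riseDecoupled, MarkedGraph.initMarking, Latch.isOdd]
  | @cons ls m e hr he ih =>
    obtain ⟨ih1, ih2⟩ := ih
    constructor
    · intro a
      obtain ⟨hsum, hiff⟩ := ih1 a
      by_cases h1 : e = Event.Rise a
      · subst h1
        have hen : 0 < m _ _ (RDPlace.rise a) := he _ (RDPlace.rise a)
        simp only [MarkedGraph.fire, transparency]
        simp
        omega
      · by_cases h2 : e = Event.Fall a
        · subst h2
          have hen : 0 < m _ _ (RDPlace.fall a) := he _ (RDPlace.fall a)
          simp only [MarkedGraph.fire, transparency]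
          simp
          omega
        · have heq : transparency (e :: ls) a = transparency ls a := by
            cases e with
            | Rise x =>
              have : x ≠ a := fun hh => h1 (by rw [hh])
              simp [transparency, this]
            | Fall x =>
              have : x ≠ a := fun hh => h2 (by rw [hh])
              simp [transparency, this]
          simp only [MarkedGraph.fire, heq]
          have nra : Event.Rise a ≠ e := fun hh => h1 hh.symm
          have nfa : Event.Fall a ≠ e := fun hh => h2 hh.symm
          simp [nra, nfa]
          exact ⟨hsum, hiff⟩
    · intro a b hn
      have hab : a ≠ b := neighbor_ne hn
      have hsum := ih2 a b hn
      by_cases h1 : e = Event.Fall a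
      · subst h1
        have hen : 0 < m _ _ (RDPlace.fall a) := he _ (RDPlace.fall a)
        have nfb : Event.Fall b ≠ Event.Fall a := by intro hh; exact hab (Event.Fall.inj hh).symm
        simp only [MarkedGraph.fire]
        simp [hab, nfb]
        omega
      · by_cases h2 : e = Event.Fall b
        · subst h2
          have hen : 0 < m _ _ (RDPlace.fallFall a b hn) := he _ (RDPlace.fallFall a b hn)
          have nfa : Event.Fall a ≠ Event.Fall b := by intro hh; exact hab (Event.Fall.inj hh)
          simp only [MarkedGraph.fire]
          simp [nfa]
          omega
        · by_cases h3 : e = Event.Rise a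
          · subst h3
            have hen : 0 < m _ _ (RDPlace.fallRise a b hn) := he _ (RDPlace.fallRise a b hn)
            simp only [MarkedGraph.fire]
            simp
            omega
          · have n1 : Event.Fall a ≠ e := fun hh => h1 hh.symm
            have n2 : Event.Fall b ≠ e := fun hh => h2 hh.symm
            have n3 : Event.Rise a ≠ e := fun hh => h3 hh.symm
            simp only [MarkedGraph.fire]
            simp [n1, n2, n3]
            omega

end Aux

/-- in rise-decoupled, when a trace ends in `l-` with `l-`
enabled in the marking reached by the prefix, every left neighbor of `l` is
opaque in the prefix. -/
theorem rise_decoupled_left_neighbors_opaque {even odd : Type} (c : Circuit even odd)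
    (st0 : Latch even odd → Value) (t' : List (Event (Latch even odd)))
    (l : Latch even odd) (v : Value) (m' : Marking (riseDecoupled c))
    (hreach : (riseDecoupled c).reaches t' m')
    (henabled : (riseDecoupled c).enabled (.Fall l) m')
    (hopaque : transparency (.Fall l :: t') l = .Opaque)
    (hasync : c.async st0 (.Fall l :: t') l .Opaque v) :
    ∀ l', c.neighbor l' l → transparency t' l' = .Opaque := by
  intro l' hn
  obtain ⟨inv1, inv2⟩ := rd_invariant hreach
  have hen : 0 < m' _ _ (RDPlace.fallFall l' l hn) := henabled _ (RDPlace.fallFall l' l hn)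
  have hcyc := inv2 l' l hn
  obtain ⟨hsum, hiff⟩ := inv1 l'
  cases htr : transparency t' l' with
  | Transparent => exfalso; have := hiff.mp htr; omega
  | Opaque => rfl
end
end

section
/- Transparency after a trace composes correctly with reachable markings in the fall-decoupled protocol: if a marking m is reachable by trace t under the fall-decoupled marked graph and latch l is transparent in t, then num_events(l+, t) = 1 + num_events(l-, t) when l is even, and num_events(l+, t) = num_events(l-, t) when l is odd. -/
open scoped Classical
noncomputable section

private lemma fd_inv {even odd : Type} (c : Circuit even odd)
    {t : List (Event (Latch even odd))} {m : Marking (fallDecoupled c)}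
    (h : (fallDecoupled c).reaches t m) (l : Latch even odd) :
    (transparency t l = .Transparent →
       m (.Rise l) (.Fall l) (FDPlace.fall l) = 1 ∧
       m (.Fall l) (.Rise l) (FDPlace.rise l) = 0 ∧
       numEvents (.Rise l) t = (if l.isOdd then 0 else 1) + numEvents (.Fall l) t) ∧
    (transparency t l = .Opaque →
       m (.Rise l) (.Fall l) (FDPlace.fall l) = 0 ∧
       m (.Fall l) (.Rise l) (FDPlace.rise l) = 1 ∧
       numEvents (.Fall l) t = (if l.isOdd then 1 else 0) + numEvents (.Rise l) t) := by
  induction h with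
  | nil =>
      by_cases hodd : l.isOdd <;>
        simp [transparency, fallDecoupled, numEvents, hodd]
  | @cons ls m e hreach hen ih =>
      rcases e with l' | l'
      · by_cases hl' : l' = l
        · subst hl'
          have hen' := hen _ (FDPlace.rise l')
          rcases htr : transparency ls l' with _ | _
          · exact absurd hen' (by simp [(ih.1 htr).2.1])
          · obtain ⟨hf, hr, hc⟩ := ih.2 htr
            constructor
            · intro _
              refine ⟨?_, ?_, ?_⟩
              · simp [MarkedGraph.fire, hf]
              · simp [MarkedGraph.fire, hr]
              · simp only [numEvents]
                by_cases hodd : l'.isOdd <;>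
                  simp only [hodd, if_true, if_false, reduceCtorEq, reduceIte,
                    Event.Rise.injEq, Event.Fall.injEq] at hc ⊢ <;>
                  simp_all <;> omega
            · intro hcontra
              simp [transparency] at hcontra
        · constructor
          · intro htr
            simp [transparency, hl'] at htr
            obtain ⟨hf, hr, hc⟩ := ih.1 htr
            refine ⟨?_, ?_, ?_⟩
            · simpa [MarkedGraph.fire, hl', Ne.symm hl'] using hf
            · simpa [MarkedGraph.fire, hl', Ne.symm hl'] using hr
            · simpa [numEvents, hl'] using hc
          · intro htr
            simp [transparency, hl'] at htr
            obtain ⟨hf, hr, hc⟩ := ih.2 htr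
            refine ⟨?_, ?_, ?_⟩
            · simpa [MarkedGraph.fire, hl', Ne.symm hl'] using hf
            · simpa [MarkedGraph.fire, hl', Ne.symm hl'] using hr
            · simpa [numEvents, hl'] using hc
      · by_cases hl' : l' = l
        · subst hl'
          have hen' := hen _ (FDPlace.fall l')
          rcases htr : transparency ls l' with _ | _
          · obtain ⟨hf, hr, hc⟩ := ih.1 htr
            constructor
            · intro hcontra
              simp [transparency] at hcontra
            · intro _
              refine ⟨?_, ?_, ?_⟩
              · simp [MarkedGraph.fire, hf]
              · simp [MarkedGraph.fire, hr]
              · simp only [numEvents]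
                by_cases hodd : l'.isOdd <;>
                  simp only [hodd, if_true, if_false, reduceCtorEq, reduceIte,
                    Event.Rise.injEq, Event.Fall.injEq] at hc ⊢ <;>
                  simp_all <;> omega
          · exact absurd hen' (by simp [(ih.2 htr).1])
        · constructor
          · intro htr
            simp [transparency, hl'] at htr
            obtain ⟨hf, hr, hc⟩ := ih.1 htr
            refine ⟨?_, ?_, ?_⟩
            · simpa [MarkedGraph.fire, hl', Ne.symm hl'] using hf
            · simpa [MarkedGraph.fire, hl', Ne.symm hl'] using hr
            · simpa [numEvents, hl'] using hc
          · intro htr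
            simp [transparency, hl'] at htr
            obtain ⟨hf, hr, hc⟩ := ih.2 htr
            refine ⟨?_, ?_, ?_⟩
            · simpa [MarkedGraph.fire, hl', Ne.symm hl'] using hf
            · simpa [MarkedGraph.fire, hl', Ne.symm hl'] using hr
            · simpa [numEvents, hl'] using hc

/-- in fall-decoupled, a transparent latch's rise count relates
to its fall count according to parity. -/
theorem fall_decoupled_transparent_counts {even odd : Type} (c : Circuit even odd)
    (t : List (Event (Latch even odd))) (m : Marking (fallDecoupled c))
    (h : (fallDecoupled c).reaches t m)
    (l : Latch even odd) (hl : transparency t l = .Transparent) :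
    numEvents (.Rise l) t =
      if l.isOdd then numEvents (.Fall l) t else 1 + numEvents (.Fall l) t := by
  have hc := ((fd_inv c h l).1 hl).2.2
  by_cases hodd : l.isOdd <;> simp [hodd] at hc ⊢ <;> omega
end
end
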